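/- Let MF_2 be the Milnor group of the free group on two generators x_1, x_2. Then MF_2 is nilpotent of class at most 2, hence the commutator subgroup of MF_2 is central. -/

import Mathlib

/-- The subgroup of relators defining the Milnor group. -/
def milnorRelators {G : Type*} [Group G] {n : ℕ} (x : Fin n → G) : Subgroup G :=
  Subgroup.normalClosure
    {g : G | ∃ (i : Fin n) (y : G),
      g = (x i)⁻¹ * (y⁻¹ * x i * y)⁻¹ * x i * (y⁻¹ * x i * y)}

instance {G : Type*} [Group G] {n : ℕ} (x : Fin n → G) : (milnorRelators x).Normal :=
  Subgroup.normalClosure_normal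

/-!
Write `a, b` for the images of `x₁, x₂`. The Milnor relations say that `a` commutes with its
conjugate `b a b⁻¹`, hence with `⁅a, b⁆ = a (b a b⁻¹)⁻¹`, and that `b` commutes with `a b a⁻¹`,
hence with `⁅a, b⁆ = (a b a⁻¹) b⁻¹`. So `⁅a, b⁆` commutes with both generators and is central.
Modulo the centre the two generators then commute, so the quotient by the centre is abelian,
i.e. the commutator subgroup is central, which is nilpotency class at most `2`.
-/

open Subgroup
open scoped commutatorElement

section Generators

variable {G H : Type*} [Group G] [Group H] {s : Set G}

theorem closure_image_eq_top_of_surjective (f : G →* H) (hf : Function.Surjective f)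
    (hs : closure s = ⊤) : closure (f '' s) = ⊤ := by
  rw [← MonoidHom.map_closure, hs, map_top_of_surjective f hf]

theorem mem_center_of_forall_commute (hs : closure s = ⊤) {c : G}
    (hc : ∀ x ∈ s, Commute x c) : c ∈ center G := by
  rw [← centralizer_univ, ← coe_top, ← hs, centralizer_closure]
  exact hc

theorem isMulCommutative_of_closure_eq_top (hs : closure s = ⊤)
    (hcomm : ∀ x ∈ s, ∀ y ∈ s, Commute x y) : IsMulCommutative G := by
  have hcenter : center G = ⊤ := top_le_iff.1 <| hs ▸ closure_le _ |>.2 fun x hx =>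
    mem_center_of_forall_commute hs fun y hy => hcomm y hy x hx
  exact center_eq_top_iff.1 hcenter

theorem commutator_le_center_of_closure_eq_top (hs : closure s = ⊤)
    (hcomm : ∀ x ∈ s, ∀ y ∈ s, ⁅x, y⁆ ∈ center G) : commutator G ≤ center G := by
  rw [← Normal.quotient_commutative_iff_commutator_le]
  refine isMulCommutative_of_closure_eq_top
    (closure_image_eq_top_of_surjective _ (QuotientGroup.mk'_surjective (center G)) hs) ?_
  rintro _ ⟨x, hx, rfl⟩ _ ⟨y, hy, rfl⟩
  rw [← commutatorElement_eq_one_iff_commute, ← map_commutatorElement, QuotientGroup.mk'_apply,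
    QuotientGroup.eq_one_iff]
  exact hcomm x hx y hy

theorem commutator_le_center_of_closure_pair_eq_top {a b : G} (hab : closure {a, b} = ⊤)
    (hcenter : ⁅a, b⁆ ∈ center G) : commutator G ≤ center G := by
  have hcenter' : ⁅b, a⁆ ∈ center G := commutatorElement_inv a b ▸ inv_mem hcenter
  refine commutator_le_center_of_closure_eq_top hab ?_
  simp only [Set.mem_insert_iff, Set.mem_singleton_iff]
  rintro x (rfl | rfl) y (rfl | rfl) <;> simp [hcenter, hcenter']

end Generators

section Commutators

variable {G : Type*} [Group G] {a b : G}

theorem commute_commutatorElement_of_commute_conj_left (h : Commute a (b * a * b⁻¹)) :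
    Commute a ⁅a, b⁆ := by
  have hab : ⁅a, b⁆ = a * (b * a * b⁻¹)⁻¹ := by group
  rw [hab]
  exact (Commute.refl a).mul_right h.inv_right

theorem commute_commutatorElement_of_commute_conj_right (h : Commute b (a * b * a⁻¹)) :
    Commute b ⁅a, b⁆ := by
  rw [commutatorElement_def]
  exact h.mul_right (Commute.refl b).inv_right

theorem commutatorElement_mem_center_of_commute_conj (hab : closure {a, b} = ⊤)
    (ha : Commute a (b * a * b⁻¹)) (hb : Commute b (a * b * a⁻¹)) : ⁅a, b⁆ ∈ center G := by
  refine mem_center_of_forall_commute hab ?_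
  simp only [Set.mem_insert_iff, Set.mem_singleton_iff]
  rintro x (rfl | rfl)
  exacts [commute_commutatorElement_of_commute_conj_left ha,
    commute_commutatorElement_of_commute_conj_right hb]

end Commutators

section Milnor

theorem commute_conj_of_milnorRelators {G : Type*} [Group G] {n : ℕ} (x : Fin n → G)
    (i : Fin n) (y : G ⧸ milnorRelators x) :
    Commute (x i : G ⧸ milnorRelators x) (y⁻¹ * x i * y) := by
  obtain ⟨z, rfl⟩ := QuotientGroup.mk_surjective y
  have hrel : ((⁅(x i)⁻¹, (z⁻¹ * x i * z)⁻¹⁆ : G) : G ⧸ milnorRelators x) = 1 := by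
    rw [QuotientGroup.eq_one_iff, commutatorElement_def, inv_inv, inv_inv]
    exact subset_normalClosure ⟨i, z, rfl⟩
  rw [← QuotientGroup.mk'_apply, map_commutatorElement, commutatorElement_eq_one_iff_commute]
    at hrel
  simpa using hrel.inv_inv

theorem closure_mk_of_fin_two_eq_top (N : Subgroup (FreeGroup (Fin 2))) [N.Normal] :
    closure {(QuotientGroup.mk (FreeGroup.of 0) : FreeGroup (Fin 2) ⧸ N),
      QuotientGroup.mk (FreeGroup.of 1)} = ⊤ := by
  have hrange : Set.range (FreeGroup.of : Fin 2 → FreeGroup (Fin 2)) =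
      {FreeGroup.of 0, FreeGroup.of 1} := by
    ext; simp [Fin.exists_fin_two, eq_comm]
  have := closure_image_eq_top_of_surjective _ (QuotientGroup.mk'_surjective N)
    (hrange ▸ FreeGroup.closure_range_of (Fin 2))
  rwa [Set.image_pair] at this

end Milnor

/-- The Milnor group `MF₂` of the free group on two generators is nilpotent of class
at most `2` (the third term of its lower central series is trivial), hence its
commutator subgroup is central. -/
theorem freeMilnorGroupTwo_class_two :
    Subgroup.lowerCentralSeries
      (⊤ : Subgroup (FreeGroup (Fin 2) ⧸ milnorRelators (FreeGroup.of : Fin 2 → FreeGroup (Fin 2))))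
      2 = ⊥ ∧
    commutator
      (FreeGroup (Fin 2) ⧸ milnorRelators (FreeGroup.of : Fin 2 → FreeGroup (Fin 2))) ≤
    Subgroup.center
      (FreeGroup (Fin 2) ⧸ milnorRelators (FreeGroup.of : Fin 2 → FreeGroup (Fin 2))) := by
  set N := milnorRelators (FreeGroup.of : Fin 2 → FreeGroup (Fin 2))
  have hgen := closure_mk_of_fin_two_eq_top N
  have hconj (i : Fin 2) (y : FreeGroup (Fin 2) ⧸ N) := commute_conj_of_milnorRelators _ i y
  have hcenter := commutatorElement_mem_center_of_commute_conj hgen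
    (by simpa using hconj 0 (QuotientGroup.mk (FreeGroup.of 1))⁻¹)
    (by simpa using hconj 1 (QuotientGroup.mk (FreeGroup.of 0))⁻¹)
  have hclass := commutator_le_center_of_closure_pair_eq_top hgen hcenter
  exact ⟨Subgroup.lowerCentralSeries_succ_eq_bot ⊤ (by rwa [top_lowerCentralSeries_one]), hclass⟩
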